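/- Let n ≥ 1, let a < b, let Z = {z_j : j ∈ ℤ} be n-close on (a,b), and let F : [a,b] → ℝ be zig-zag of order n with respect to Z. Then |F(z_j) - F(z_{j+1})| ≥ 2^n · (z_{j+1} - z_j) for every j ∈ ℤ. -/

import Mathlib

open Set Filter MeasureTheory Topology
open scoped ENNReal NNReal

/-- `M_f(x,r) = sup { |f(x)-f(y)|/r : |x-y| ≤ r }`, valued in `[0,∞]`. -/
noncomputable def Mf (f : ℝ → ℝ) (x r : ℝ) : ℝ≥0∞ :=
  ⨆ y ∈ {y : ℝ | |x - y| ≤ r}, ENNReal.ofReal (|f x - f y| / r)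

/-- The big Lip function: `Lip f(x) = limsup_{r→0⁺} M_f(x,r)`. -/
noncomputable def bigLip (f : ℝ → ℝ) (x : ℝ) : ℝ≥0∞ :=
  Filter.limsup (fun r => Mf f x r) (𝓝[>] (0 : ℝ))

/-- The little lip function: `lip f(x) = liminf_{r→0⁺} M_f(x,r)`. -/
noncomputable def litLip (f : ℝ → ℝ) (x : ℝ) : ℝ≥0∞ :=
  Filter.liminf (fun r => Mf f x r) (𝓝[>] (0 : ℝ))

/-- A set `E ⊆ ℝ` is trim if `λ(E ∩ (a,b)) < b - a` for every open interval `(a,b)`. -/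
def Trim (E : Set ℝ) : Prop :=
  ∀ a b : ℝ, a < b → volume (E ∩ Ioo a b) < ENNReal.ofReal (b - a)

/-- `Φ_{n,[a,b]}(x) = 2^{-n} min(x-a, b-x)` on `[a,b]`, and `0` outside. -/
noncomputable def Phi (n : ℕ) (a b x : ℝ) : ℝ :=
  if x ∈ Icc a b then min (x - a) (b - x) / 2 ^ n else 0

/-- `Z = {z j : j ∈ ℤ}` is `n`-close on `(a,b)`. -/
def NClose (z : ℤ → ℝ) (n : ℕ) (a b : ℝ) : Prop :=
  (∀ j : ℤ, a < z j ∧ z j < z (j + 1) ∧ z (j + 1) < b) ∧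
  Tendsto z atTop (𝓝 b) ∧ Tendsto z atBot (𝓝 a) ∧
  (∀ j : ℤ, z (j + 1) - z j < min (z j - a) (b - z (j + 1)) / 4 ^ n)

/-- `F` is zig-zag of order `n` with respect to `z` on `[a,b]`. -/
def ZigZag (F : ℝ → ℝ) (z : ℤ → ℝ) (n : ℕ) (a b : ℝ) : Prop :=
  F a = F b ∧
  (∀ j : ℤ, Even j → F (z j) = F a) ∧
  (∀ j : ℤ, Odd j → F (z j) = F a + Phi n a b (z j)) ∧
  (∀ j : ℤ, ∀ x ∈ Icc (z j) (z (j + 1)),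
    F x = F (z j) + (F (z (j + 1)) - F (z j)) / (z (j + 1) - z j) * (x - z j))

/-!
Consecutive nodes `z j`, `z (j + 1)` consist of one even and one odd node, so `F` jumps between
them by `Φ` at the odd one, i.e. by at least `2⁻ⁿ min (z j - a, b - z (j + 1))`. By `n`-closeness
this exceeds `2⁻ⁿ 4ⁿ (z (j + 1) - z j) = 2ⁿ (z (j + 1) - z j)`.
-/

theorem Phi_nonneg (n : ℕ) (a b x : ℝ) : 0 ≤ Phi n a b x := by
  unfold Phi
  split_ifs with hx
  · exact div_nonneg (le_min (sub_nonneg.2 hx.1) (sub_nonneg.2 hx.2)) (by positivity)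
  · exact le_rfl

theorem min_div_two_pow_le_Phi {n : ℕ} {a b u v x : ℝ} (hau : a ≤ u) (hx : x ∈ Icc u v)
    (hvb : v ≤ b) : min (u - a) (b - v) / 2 ^ n ≤ Phi n a b x := by
  rw [Phi, if_pos ⟨hau.trans hx.1, hx.2.trans hvb⟩]
  gcongr <;> linarith [hx.1, hx.2]

theorem two_pow_mul_lt_div_two_pow_of_lt_div_four_pow {n : ℕ} {d m : ℝ} (h : d < m / 4 ^ n) :
    2 ^ n * d < m / 2 ^ n := by
  have h4 : (4 : ℝ) ^ n = 2 ^ n * 2 ^ n := by rw [← mul_pow]; norm_num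
  calc 2 ^ n * d < 2 ^ n * (m / 4 ^ n) := by gcongr
    _ = m / 2 ^ n := by rw [h4]; field_simp

theorem ZigZag.exists_abs_sub_succ_eq_Phi {F : ℝ → ℝ} {z : ℤ → ℝ} {n : ℕ} {a b : ℝ}
    (hF : ZigZag F z n a b) (j : ℤ) :
    ∃ k, (k = j ∨ k = j + 1) ∧ |F (z j) - F (z (j + 1))| = Phi n a b (z k) := by
  obtain ⟨-, heven, hodd, -⟩ := hF
  rcases Int.even_or_odd j with hj | hj
  · refine ⟨j + 1, Or.inr rfl, ?_⟩
    rw [heven j hj, hodd (j + 1) hj.add_one, sub_add_cancel_left, abs_neg,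
      abs_of_nonneg (Phi_nonneg _ _ _ _)]
  · refine ⟨j, Or.inl rfl, ?_⟩
    rw [hodd j hj, heven (j + 1) hj.add_one, add_sub_cancel_left,
      abs_of_nonneg (Phi_nonneg _ _ _ _)]

theorem zigZag_steep (n : ℕ) (a b : ℝ)
    (z : ℤ → ℝ) (hz : NClose z n a b)
    (F : ℝ → ℝ) (hF : ZigZag F z n a b) :
    ∀ j : ℤ, 2 ^ n * (z (j + 1) - z j) ≤ |F (z j) - F (z (j + 1))| := by
  intro j
  obtain ⟨hord, -, -, hclose⟩ := hz
  obtain ⟨haz, hzz, hzb⟩ := hord j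
  obtain ⟨k, hk, hjump⟩ := hF.exists_abs_sub_succ_eq_Phi j
  have hzk : z k ∈ Icc (z j) (z (j + 1)) := by
    rcases hk with rfl | rfl
    · exact ⟨le_rfl, hzz.le⟩
    · exact ⟨hzz.le, le_rfl⟩
  calc 2 ^ n * (z (j + 1) - z j)
      ≤ min (z j - a) (b - z (j + 1)) / 2 ^ n :=
        (two_pow_mul_lt_div_two_pow_of_lt_div_four_pow (hclose j)).le
    _ ≤ Phi n a b (z k) := min_div_two_pow_le_Phi haz.le hzk hzb.le
    _ = |F (z j) - F (z (j + 1))| := hjump.symm
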